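/- Let (A, ∧, ∼, ∽, 1) be a pseudo equality algebra and let Ψ(A) = (A, ∧, →, ⇝, 1) be its associated pseudo BCK(pC)-meet-semilattice, where x → y = (x∧y) ∼ x and x ⇝ y = x ∽ (x∧y). If σ: A → A is an internal state of type I (respectively type II) on A, then σ is an internal state of type I (respectively type II) on Ψ(A), i.e., σ satisfies (SB1), (SB2) (respectively (SB2')), (SB3) and (SB4). -/

import Mathlib

/-- A pseudo equality algebra (JK-algebra): a meet-semilattice with top element `⊤`
(playing the role of `1`) equipped with two equality operations `sim` (`∼`) and
`bsim` (`∽`) satisfying axioms (A2)–(A7). -/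
class PseudoEqualityAlgebra (A : Type*) extends SemilatticeInf A, OrderTop A where
  sim : A → A → A
  bsim : A → A → A
  sim_self : ∀ x : A, sim x x = ⊤
  bsim_self : ∀ x : A, bsim x x = ⊤
  sim_top : ∀ x : A, sim x ⊤ = x
  top_bsim : ∀ x : A, bsim ⊤ x = x
  A4a : ∀ x y z : A, x ≤ y → y ≤ z → sim x z ≤ sim y z
  A4b : ∀ x y z : A, x ≤ y → y ≤ z → sim x z ≤ sim x y
  A4c : ∀ x y z : A, x ≤ y → y ≤ z → bsim z x ≤ bsim z y
  A4d : ∀ x y z : A, x ≤ y → y ≤ z → bsim z x ≤ bsim y x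
  A5a : ∀ x y z : A, sim x y ≤ sim (x ⊓ z) (y ⊓ z)
  A5b : ∀ x y z : A, bsim x y ≤ bsim (x ⊓ z) (y ⊓ z)
  A6a : ∀ x y z : A, sim x y ≤ bsim (sim z x) (sim z y)
  A6b : ∀ x y z : A, bsim x y ≤ sim (bsim x z) (bsim y z)
  A7a : ∀ x y z : A, sim x y ≤ sim (sim x z) (sim y z)
  A7b : ∀ x y z : A, bsim x y ≤ bsim (bsim z x) (bsim z y)

open PseudoEqualityAlgebra

/-- An internal state of type I on a pseudo equality algebra:
axioms (IS1), (IS2), (IS3), (IS4). -/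
def IsInternalStateI {A : Type*} [PseudoEqualityAlgebra A] (σ : A → A) : Prop :=
  (∀ x y : A, x ≤ y → σ x ≤ σ y) ∧
  (∀ x y : A,
    σ (sim (x ⊓ y) x) = sim (σ y) (σ (bsim (sim (x ⊓ y) x) y)) ∧
    σ (bsim x (x ⊓ y)) = bsim (σ (sim y (bsim x (x ⊓ y)))) (σ y)) ∧
  (∀ x y : A,
    σ (sim (σ x) (σ y)) = sim (σ x) (σ y) ∧
    σ (bsim (σ x) (σ y)) = bsim (σ x) (σ y)) ∧
  (∀ x y : A, σ (σ x ⊓ σ y) = σ x ⊓ σ y)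

/-- An internal state of type II on a pseudo equality algebra:
axioms (IS1), (IS2'), (IS3), (IS4). -/
def IsInternalStateII {A : Type*} [PseudoEqualityAlgebra A] (σ : A → A) : Prop :=
  (∀ x y : A, x ≤ y → σ x ≤ σ y) ∧
  (∀ x y : A,
    σ (sim (x ⊓ y) x) = sim (σ y) (σ (bsim (sim (x ⊓ y) y) x)) ∧
    σ (bsim x (x ⊓ y)) = bsim (σ (sim x (bsim y (x ⊓ y)))) (σ y)) ∧
  (∀ x y : A,
    σ (sim (σ x) (σ y)) = sim (σ x) (σ y) ∧
    σ (bsim (σ x) (σ y)) = bsim (σ x) (σ y)) ∧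
  (∀ x y : A, σ (σ x ⊓ σ y) = σ x ⊓ σ y)

/-- The implication `x → y = (x∧y) ∼ x` of the associated
pseudo BCK(pC)-meet-semilattice `Ψ(A)`. -/
def pimp {A : Type*} [PseudoEqualityAlgebra A] (x y : A) : A := sim (x ⊓ y) x

/-- The implication `x ⇝ y = x ∽ (x∧y)` of the associated
pseudo BCK(pC)-meet-semilattice `Ψ(A)`. -/
def plimp {A : Type*} [PseudoEqualityAlgebra A] (x y : A) : A := bsim x (x ⊓ y)

/-- An internal state of type I on the pseudo BCK-meet-semilattice `Ψ(A)`: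
axioms (SB1), (SB2), (SB3), (SB4). -/
def IsSBStateI {A : Type*} [PseudoEqualityAlgebra A] (μ : A → A) : Prop :=
  (∀ x y : A, x ≤ y → μ x ≤ μ y) ∧
  (∀ x y : A,
    μ (pimp x y) = pimp (μ (plimp (pimp x y) y)) (μ y) ∧
    μ (plimp x y) = plimp (μ (pimp (plimp x y) y)) (μ y)) ∧
  (∀ x y : A,
    μ (pimp (μ x) (μ y)) = pimp (μ x) (μ y) ∧
    μ (plimp (μ x) (μ y)) = plimp (μ x) (μ y)) ∧
  (∀ x y : A, μ (μ x ⊓ μ y) = μ x ⊓ μ y)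

/-- An internal state of type II on the pseudo BCK-meet-semilattice `Ψ(A)`:
axioms (SB1), (SB2'), (SB3), (SB4). -/
def IsSBStateII {A : Type*} [PseudoEqualityAlgebra A] (μ : A → A) : Prop :=
  (∀ x y : A, x ≤ y → μ x ≤ μ y) ∧
  (∀ x y : A,
    μ (pimp x y) = pimp (μ (plimp (pimp y x) x)) (μ y) ∧
    μ (plimp x y) = plimp (μ (pimp (plimp y x) x)) (μ y)) ∧
  (∀ x y : A,
    μ (pimp (μ x) (μ y)) = pimp (μ x) (μ y) ∧
    μ (plimp (μ x) (μ y)) = plimp (μ x) (μ y)) ∧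
  (∀ x y : A, μ (μ x ⊓ μ y) = μ x ⊓ μ y)
/-!
In `Ψ(A)` every element lies below its implications from anything: `y ≤ x → y`, `y ≤ x ⇝ y`,
and also `y ≤ (y → x) ⇝ x`, `y ≤ (y ⇝ x) → x`. Below `x`, the implications collapse to the
equality operations: `y ≤ x` gives `x → y = y ∼ x` and `x ⇝ y = x ∽ y`. Since `σ` is monotone,
both sides of (SB2) resp. (SB2') thereby become the two sides of (IS2) resp. (IS2'). For (SB3),
rewrite `σ x ∧ σ y` as `σ (σ x ∧ σ y)` using (IS4) and apply (IS3).
-/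

namespace PseudoEqualityAlgebra

variable {A : Type*} [PseudoEqualityAlgebra A]

theorem pimp_eq_sim_of_le {x y : A} (h : y ≤ x) : pimp x y = sim y x := by
  rw [pimp, inf_eq_right.mpr h]

theorem plimp_eq_bsim_of_le {x y : A} (h : y ≤ x) : plimp x y = bsim x y := by
  rw [plimp, inf_eq_right.mpr h]

theorem le_pimp (x y : A) : y ≤ pimp x y :=
  calc y = sim y ⊤ := (sim_top y).symm
    _ ≤ sim (y ⊓ x) (⊤ ⊓ x) := A5a y ⊤ x
    _ = pimp x y := by rw [top_inf_eq, inf_comm, pimp]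

theorem le_plimp (x y : A) : y ≤ plimp x y :=
  calc y = bsim ⊤ y := (top_bsim y).symm
    _ ≤ bsim (⊤ ⊓ x) (y ⊓ x) := A5b ⊤ y x
    _ = plimp x y := by rw [top_inf_eq, inf_comm, plimp]

theorem le_bsim_sim (x z : A) : x ≤ bsim (sim z x) z := by
  simpa only [sim_top] using A6a x ⊤ z

theorem le_sim_bsim (x z : A) : x ≤ sim z (bsim x z) := by
  simpa only [top_bsim] using A6b ⊤ x z

theorem le_plimp_pimp (x y : A) : y ≤ plimp (pimp y x) x := by
  rw [plimp_eq_bsim_of_le (le_pimp y x)]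
  calc y ≤ bsim (pimp y x) (y ⊓ x) := le_bsim_sim y (y ⊓ x)
    _ ≤ bsim (pimp y x) x := A4c _ _ _ inf_le_right (le_pimp y x)

theorem le_pimp_plimp (x y : A) : y ≤ pimp (plimp y x) x := by
  rw [pimp_eq_sim_of_le (le_plimp y x)]
  calc y ≤ sim (y ⊓ x) (plimp y x) := le_sim_bsim y (y ⊓ x)
    _ ≤ sim x (plimp y x) := A4a _ _ _ inf_le_right (le_plimp y x)

variable {σ : A → A}

theorem map_pimp_map_map (hsim : ∀ x y, σ (sim (σ x) (σ y)) = sim (σ x) (σ y))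
    (hinf : ∀ x y, σ (σ x ⊓ σ y) = σ x ⊓ σ y) (x y : A) :
    σ (pimp (σ x) (σ y)) = pimp (σ x) (σ y) := by
  rw [pimp, ← hinf]
  exact hsim _ _

theorem map_plimp_map_map (hbsim : ∀ x y, σ (bsim (σ x) (σ y)) = bsim (σ x) (σ y))
    (hinf : ∀ x y, σ (σ x ⊓ σ y) = σ x ⊓ σ y) (x y : A) :
    σ (plimp (σ x) (σ y)) = plimp (σ x) (σ y) := by
  rw [plimp, ← hinf]
  exact hbsim _ _

end PseudoEqualityAlgebra

namespace IsInternalStateI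

variable {A : Type*} [PseudoEqualityAlgebra A] {σ : A → A}

theorem isSBStateI (hσ : IsInternalStateI σ) : IsSBStateI σ := by
  obtain ⟨hmono, hIS2, hIS3, hinf⟩ := hσ
  refine ⟨hmono, fun x y => ⟨?_, ?_⟩, fun x y => ⟨?_, ?_⟩, hinf⟩
  · rw [pimp_eq_sim_of_le (hmono _ _ (le_plimp _ y)), plimp_eq_bsim_of_le (le_pimp x y)]
    exact (hIS2 x y).1
  · rw [plimp_eq_bsim_of_le (hmono _ _ (le_pimp _ y)), pimp_eq_sim_of_le (le_plimp x y)]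
    exact (hIS2 x y).2
  · exact map_pimp_map_map (fun x y => (hIS3 x y).1) hinf x y
  · exact map_plimp_map_map (fun x y => (hIS3 x y).2) hinf x y

end IsInternalStateI

namespace IsInternalStateII

variable {A : Type*} [PseudoEqualityAlgebra A] {σ : A → A}

theorem isSBStateII (hσ : IsInternalStateII σ) : IsSBStateII σ := by
  obtain ⟨hmono, hIS2, hIS3, hinf⟩ := hσ
  refine ⟨hmono, fun x y => ⟨?_, ?_⟩, fun x y => ⟨?_, ?_⟩, hinf⟩
  · rw [pimp_eq_sim_of_le (hmono _ _ (le_plimp_pimp x y)), plimp_eq_bsim_of_le (le_pimp y x),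
      pimp, pimp, inf_comm y x]
    exact (hIS2 x y).1
  · rw [plimp_eq_bsim_of_le (hmono _ _ (le_pimp_plimp x y)), pimp_eq_sim_of_le (le_plimp y x),
      plimp, plimp, inf_comm y x]
    exact (hIS2 x y).2
  · exact map_pimp_map_map (fun x y => (hIS3 x y).1) hinf x y
  · exact map_plimp_map_map (fun x y => (hIS3 x y).2) hinf x y

end IsInternalStateII

/-- Theorem 6.12: every internal state of type I (resp. type II) on a pseudo equality
algebra `A` is an internal state of type I (resp. type II) on its associated
pseudo BCK(pC)-meet-semilattice `Ψ(A)`. -/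
theorem stmt16 {A : Type*} [PseudoEqualityAlgebra A] (σ : A → A) :
    (IsInternalStateI σ → IsSBStateI σ) ∧ (IsInternalStateII σ → IsSBStateII σ) :=
  ⟨IsInternalStateI.isSBStateI, IsInternalStateII.isSBStateII⟩
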